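/- Let ℏ > 0, n ≥ 1, and let Σ be a real symmetric positive definite (2n) × (2n) matrix such that the complex matrix Σ + (iℏ/2) J is positive semidefinite (Hermitian positive semidefinite), where J = [[0, I_n], [−I_n, 0]] is the standard symplectic matrix. Then det Σ = (ℏ/2)^{2n} if and only if there exists a real symplectic matrix S (i.e., Sᵀ J S = J) such that Σ = (ℏ/2) Sᵀ S. Equivalently, the Gaussian state with covariance matrix Σ has purity (ℏ/2)^n (det Σ)^{−1/2} equal to 1 (is a pure state) exactly when Σ = (ℏ/2) Sᵀ S for some symplectic S. -/

import Mathlib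

open Matrix Complex
open scoped ComplexOrder MatrixOrder

/-!
Write `c = ℏ/2`. Testing `Σ + icJ ⪰ 0` against `x - iy` with `y = c Σ⁻¹ J x` gives the Loewner
inequality `Σ ⪰ c² Jᵀ Σ⁻¹ J`, whose sides have determinants `det Σ` and `c^{4n} / det Σ`. If
`det Σ = c^{2n}` they are equal, and a Loewner inequality between positive definite matrices of
equal determinant is an equality (conjugate the smaller one to `1`: eigenvalues `≥ 1` with product
`1`). Hence `Σ J Σ = c² J`, i.e. `M = Σ / c` is positive definite and symplectic. Its positive
square root `S` is symplectic too, because `Jᵀ S J` and `S⁻¹` are both positive square roots of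
`M⁻¹ = Jᵀ M J`; and `Σ = c SᵀS`. Conversely, symplectic matrices have determinant `1`.
-/

namespace Matrix

section RCLike

variable {ι 𝕜 : Type*} [Fintype ι] [DecidableEq ι] [RCLike 𝕜]

theorem eq_one_of_one_le_of_det_eq_one {C : Matrix ι ι 𝕜} (h : 1 ≤ C) (hdet : C.det = 1) :
    C = 1 := by
  have hC : C.IsHermitian := by
    simpa using (le_iff.mp h).isHermitian.add isHermitian_one
  have hge : ∀ i, 1 ≤ hC.eigenvalues i := fun i =>
    (CFC.one_le_iff (R := ℝ) C hC.isSelfAdjoint).mp h _ (hC.eigenvalues_mem_spectrum_real i)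
  have hprod : ∏ i, hC.eigenvalues i = 1 := by
    exact_mod_cast hC.det_eq_prod_eigenvalues.symm.trans hdet
  have hlog : ∑ i, Real.log (hC.eigenvalues i) = 0 := by
    rw [← Real.log_prod fun i _ => (zero_lt_one.trans_le (hge i)).ne', hprod, Real.log_one]
  have heig : ∀ i, hC.eigenvalues i = 1 := fun i =>
    Real.eq_one_of_pos_of_log_eq_zero (zero_lt_one.trans_le (hge i))
      ((Finset.sum_eq_zero_iff_of_nonneg fun i _ => Real.log_nonneg (hge i)).mp hlog i
        (Finset.mem_univ i))
  have htrace : (C - 1).trace = 0 := by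
    simp [trace_sub, hC.trace_eq_sum_eigenvalues, heig]
  exact sub_eq_zero.mp ((le_iff.mp h).trace_eq_zero_iff.mp htrace)

theorem PosDef.eq_of_le_of_det_eq {A B : Matrix ι ι 𝕜} (hB : B.PosDef) (hBA : B ≤ A)
    (hdet : A.det = B.det) : A = B := by
  set R := CFC.sqrt B
  have hRR : R * R = B := CFC.sqrt_mul_sqrt_self B hB.posSemidef.nonneg
  have hRu : IsUnit R := isUnit_of_mul_isUnit_left (hRR ▸ hB.isUnit)
  have hRd : IsUnit R.det := (isUnit_iff_isUnit_det R).mp hRu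
  have hRs : Rᴴ = R := (IsSelfAdjoint.of_nonneg (CFC.sqrt_nonneg B)).star_eq
  have hRBR : R⁻¹ * B * R⁻¹ = 1 := by
    rw [← hRR, show R⁻¹ * (R * R) * R⁻¹ = (R⁻¹ * R) * (R * R⁻¹) by noncomm_ring,
      nonsing_inv_mul R hRd, mul_nonsing_inv R hRd, one_mul]
  have hC : 1 ≤ R⁻¹ * A * R⁻¹ := by
    simpa [star_eq_conjTranspose, conjTranspose_nonsing_inv, hRs, hRBR] using
      star_left_conjugate_le_conjugate hBA R⁻¹
  have hCdet : (R⁻¹ * A * R⁻¹).det = 1 := by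
    rw [det_mul, det_mul, hdet, ← det_mul, ← det_mul, hRBR, det_one]
  calc A = R * (R⁻¹ * A * R⁻¹) * R := by
        rw [show R * (R⁻¹ * A * R⁻¹) * R = (R * R⁻¹) * A * (R⁻¹ * R) by noncomm_ring,
          nonsing_inv_mul R hRd, mul_nonsing_inv R hRd, one_mul, mul_one]
    _ = B := by rw [eq_one_of_one_le_of_det_eq_one hC hCdet, mul_one, hRR]

end RCLike

section Uncertainty

variable {ι : Type*} [Fintype ι]

theorem quadratic_nonneg_of_posSemidef_add_I_smul {A B : Matrix ι ι ℝ} {c : ℝ}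
    (h : (A.map ofReal + (I * (c : ℂ)) • B.map ofReal).PosSemidef) (x y : ι → ℝ) :
    0 ≤ x ⬝ᵥ A *ᵥ x + y ⬝ᵥ A *ᵥ y + c * (x ⬝ᵥ B *ᵥ y - y ⬝ᵥ B *ᵥ x) := by
  convert h.re_dotProduct_nonneg (fun i => (x i : ℂ) - I * y i) using 1
  simp only [dotProduct, mulVec, Finset.mul_sum, ← Finset.sum_add_distrib,
    ← Finset.sum_sub_distrib, RCLike.re_to_complex, Complex.re_sum]
  refine Finset.sum_congr rfl fun i _ => Finset.sum_congr rfl fun j _ => ?_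
  simp only [Pi.star_apply, star_sub, RCLike.star_def, conj_ofReal, star_mul', conj_I, neg_mul,
    sub_neg_eq_add, add_apply, map_apply, smul_apply, smul_eq_mul, mul_re, add_re, ofReal_re,
    I_re, zero_mul, I_im, ofReal_im, mul_zero, sub_self, add_zero, mul_im, one_mul, zero_add,
    sub_re, sub_zero, add_im, sub_im, zero_sub, mul_neg]
  ring

theorem sq_smul_transpose_mul_inv_mul_le [DecidableEq ι] {A B : Matrix ι ι ℝ} {c : ℝ}
    (hA : A.PosDef) (hB : Bᵀ = -B) (h : (A.map ofReal + (I * (c : ℂ)) • B.map ofReal).PosSemidef) :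
    c ^ 2 • (Bᵀ * A⁻¹ * B) ≤ A := by
  have hAT : Aᵀ = A := hA.isHermitian.eq
  have hAd : IsUnit A.det := hA.isUnit.map detMonoidHom
  refine le_iff.mpr (.of_dotProduct_mulVec_nonneg ?_ fun x => ?_)
  · refine hA.isHermitian.sub (IsHermitian.smul ?_ (IsSelfAdjoint.all _))
    simp [IsHermitian, transpose_nonsing_inv, hAT, Matrix.mul_assoc]
  set v := A⁻¹ *ᵥ (B *ᵥ x)
  have hAv : A *ᵥ v = B *ᵥ x := by
    rw [mulVec_mulVec, mul_nonsing_inv A hAd, one_mulVec]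
  have hxBv : x ⬝ᵥ B *ᵥ v = -((B *ᵥ x) ⬝ᵥ v) := by
    rw [dotProduct_mulVec, ← mulVec_transpose, hB, neg_mulVec, neg_dotProduct]
  have key := quadratic_nonneg_of_posSemidef_add_I_smul h x (c • v)
  simp only [mulVec_smul, dotProduct_smul, smul_dotProduct, hAv, hxBv, smul_eq_mul] at key
  have hquad : star x ⬝ᵥ (A - c ^ 2 • (Bᵀ * A⁻¹ * B)) *ᵥ x
      = x ⬝ᵥ A *ᵥ x - c ^ 2 * ((B *ᵥ x) ⬝ᵥ v) := by
    rw [star_trivial, sub_mulVec, dotProduct_sub, smul_mulVec, dotProduct_smul, smul_eq_mul,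
      ← mulVec_mulVec, ← mulVec_mulVec, dotProduct_mulVec x Bᵀ, vecMul_transpose]
  rw [hquad]
  rw [dotProduct_comm v] at key
  linarith

end Uncertainty

section Symplectic

variable {l : Type*} [Fintype l] [DecidableEq l]

theorem J_mul_J_transpose (R : Type*) [CommRing R] : J l R * (J l R)ᵀ = 1 := by
  rw [J_transpose, mul_neg, J_squared, neg_neg]

theorem sqrt_mem_symplecticGroup {M : Matrix (l ⊕ l) (l ⊕ l) ℝ} (hM : 0 ≤ M)
    (hMs : M ∈ symplecticGroup l ℝ) : CFC.sqrt M ∈ symplecticGroup l ℝ := by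
  set S := CFC.sqrt M
  set J := Matrix.J l ℝ
  have hSS : S * S = M := CFC.sqrt_mul_sqrt_self M hM
  have hST : Sᵀ = S := (IsSelfAdjoint.of_nonneg (CFC.sqrt_nonneg M)).star_eq
  have hMT : Mᵀ = M := (IsSelfAdjoint.of_nonneg hM).star_eq
  have hJJ : J * Jᵀ = 1 := J_mul_J_transpose ℝ
  have hMJM : M * J * M = J := by simpa [hMT] using SymplecticGroup.mem_iff.mp hMs
  have hMd : IsUnit M.det := SymplecticGroup.symplectic_det hMs
  have hSd : IsUnit S.det := by
    rw [← hSS, det_mul] at hMd; exact isUnit_of_mul_isUnit_left hMd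
  have hMinv : M⁻¹ = Jᵀ * M * J := by
    refine inv_eq_left_inv ?_
    rw [show Jᵀ * M * J * M = Jᵀ * (M * J * M) by noncomm_ring, hMJM]
    exact mul_eq_one_comm.mp hJJ
  have hconj : Jᵀ * S * J = S⁻¹ := by
    refine (CFC.mul_self_eq_mul_self_iff _ _ ?_ ?_).mp ?_
    · simpa [star_eq_conjTranspose] using star_left_conjugate_nonneg (CFC.sqrt_nonneg M) J
    · exact (CFC.sqrt_nonneg M).posSemidef.inv.nonneg
    · rw [← mul_inv_rev, hSS, hMinv,
        show Jᵀ * S * J * (Jᵀ * S * J) = Jᵀ * S * (J * Jᵀ) * S * J by noncomm_ring, hJJ,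
        mul_one, ← hSS]
      noncomm_ring
  rw [SymplecticGroup.mem_iff', hST]
  calc S * J * S = J * (Jᵀ * S * J) * S := by
        rw [show J * (Jᵀ * S * J) * S = (J * Jᵀ) * S * J * S by noncomm_ring, hJJ, one_mul]
    _ = J := by rw [hconj, mul_assoc, nonsing_inv_mul S hSd, mul_one]

theorem PosDef.inv_smul_mem_symplecticGroup_of_det_eq {c : ℝ} (hc : 0 < c)
    {Cov : Matrix (l ⊕ l) (l ⊕ l) ℝ} (hCov : Cov.PosDef)
    (hU : c ^ 2 • ((J l ℝ)ᵀ * Cov⁻¹ * J l ℝ) ≤ Cov) (hdet : Cov.det = c ^ (2 * Fintype.card l)) :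
    c⁻¹ • Cov ∈ symplecticGroup l ℝ := by
  set J := J l ℝ
  have hP : (c ^ 2 • (Jᵀ * Cov⁻¹ * J)).PosDef := by
    simpa using (hCov.inv.conjTranspose_mul_mul_same
      (mulVec_injective_of_isUnit ((isUnit_iff_isUnit_det J).mpr (isUnit_det_J l ℝ)))).smul
      (pow_pos hc 2)
  have hCovP : Cov = c ^ 2 • (Jᵀ * Cov⁻¹ * J) := by
    refine hP.eq_of_le_of_det_eq hU ?_
    rw [det_smul, det_mul, det_mul, det_transpose, det_nonsing_inv, Ring.inverse_eq_inv',
      SymplecticGroup.det_eq_one (SymplecticGroup.J_mem l ℝ), hdet, Fintype.card_sum]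
    field_simp
    ring
  have hCJC : Cov * J * Cov = c ^ 2 • J := by
    nth_rewrite 2 [hCovP]
    rw [Matrix.mul_smul,
      show Cov * J * (Jᵀ * Cov⁻¹ * J) = Cov * (J * Jᵀ) * Cov⁻¹ * J by noncomm_ring,
      J_mul_J_transpose, mul_one, mul_nonsing_inv Cov (hCov.isUnit.map detMonoidHom), one_mul]
  have hCovT : Covᵀ = Cov := hCov.isHermitian.eq
  rw [SymplecticGroup.mem_iff, transpose_smul, hCovT, smul_mul, smul_mul_smul_comm, hCJC,
    smul_smul, ← sq, ← mul_pow, inv_mul_cancel₀ hc.ne', one_pow, one_smul]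

theorem PosDef.det_eq_pow_iff_exists_symplectic {c : ℝ} (hc : 0 < c)
    {Cov : Matrix (l ⊕ l) (l ⊕ l) ℝ} (hCov : Cov.PosDef)
    (hU : c ^ 2 • ((J l ℝ)ᵀ * Cov⁻¹ * J l ℝ) ≤ Cov) :
    Cov.det = c ^ (2 * Fintype.card l) ↔
      ∃ S ∈ symplecticGroup l ℝ, Cov = c • (Sᵀ * S) := by
  constructor
  · intro hdet
    have hM : 0 ≤ c⁻¹ • Cov := (hCov.posSemidef.smul (inv_pos.mpr hc).le).nonneg
    have hST : (CFC.sqrt (c⁻¹ • Cov))ᵀ = CFC.sqrt (c⁻¹ • Cov) :=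
      (IsSelfAdjoint.of_nonneg (CFC.sqrt_nonneg _)).star_eq
    refine ⟨_, sqrt_mem_symplecticGroup hM
      (hCov.inv_smul_mem_symplecticGroup_of_det_eq hc hU hdet), ?_⟩
    rw [hST, CFC.sqrt_mul_sqrt_self _ hM, smul_smul, mul_inv_cancel₀ hc.ne', one_smul]
  · rintro ⟨S, hS, rfl⟩
    rw [det_smul, det_mul, det_transpose, SymplecticGroup.det_eq_one hS, Fintype.card_sum,
      mul_one, mul_one, two_mul]

end Symplectic

end Matrix

theorem gaussian_pure_iff_symplectic_general (ℏ : ℝ) (hℏ : 0 < ℏ) (n : ℕ)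
    (Cov : Matrix (Fin n ⊕ Fin n) (Fin n ⊕ Fin n) ℝ) (hCov : Cov.PosDef)
    (huncert :
      (Cov.map (Complex.ofReal) +
        (Complex.I * ((ℏ / 2 : ℝ) : ℂ)) •
          (Matrix.fromBlocks (0 : Matrix (Fin n) (Fin n) ℝ) 1 (-1) 0).map
            Complex.ofReal).PosSemidef) :
    Cov.det = (ℏ / 2) ^ (2 * n) ↔
      ∃ S : Matrix (Fin n ⊕ Fin n) (Fin n ⊕ Fin n) ℝ,
        Sᵀ * Matrix.fromBlocks (0 : Matrix (Fin n) (Fin n) ℝ) 1 (-1) 0 * S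
            = Matrix.fromBlocks (0 : Matrix (Fin n) (Fin n) ℝ) 1 (-1) 0
        ∧ Cov = (ℏ / 2) • (Sᵀ * S) := by
  have hJ : fromBlocks (0 : Matrix (Fin n) (Fin n) ℝ) 1 (-1) 0 = -J (Fin n) ℝ := by
    simp [J, fromBlocks_neg]
  rw [hJ] at huncert ⊢
  have hU := sq_smul_transpose_mul_inv_mul_le hCov (by rw [transpose_neg, J_transpose]) huncert
  simp only [transpose_neg, neg_mul, mul_neg, neg_neg] at hU
  have := hCov.det_eq_pow_iff_exists_symplectic (half_pos hℏ) hU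
  rw [Fintype.card_fin] at this
  simpa only [SymplecticGroup.mem_iff', neg_mul, mul_neg, neg_inj] using this

/-- Purity criterion for Gaussian states: if the real symmetric positive definite
covariance matrix `Σ` satisfies the quantum uncertainty condition
`Σ + (iℏ/2) J ≥ 0` (Hermitian positive semidefinite), where `J = [[0, I], [-I, 0]]` is
the standard symplectic matrix, then `det Σ = (ℏ/2)^{2n}` if and only if
`Σ = (ℏ/2) Sᵀ S` for some real symplectic matrix `S` (i.e. `Sᵀ J S = J`). -/
theorem gaussian_pure_iff_symplectic (ℏ : ℝ) (hℏ : 0 < ℏ) (n : ℕ) (hn : 1 ≤ n)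
    (Cov : Matrix (Fin n ⊕ Fin n) (Fin n ⊕ Fin n) ℝ) (hCov : Cov.PosDef)
    (huncert :
      (Cov.map (Complex.ofReal) +
        (Complex.I * ((ℏ / 2 : ℝ) : ℂ)) •
          (Matrix.fromBlocks (0 : Matrix (Fin n) (Fin n) ℝ) 1 (-1) 0).map
            Complex.ofReal).PosSemidef) :
    Cov.det = (ℏ / 2) ^ (2 * n) ↔
      ∃ S : Matrix (Fin n ⊕ Fin n) (Fin n ⊕ Fin n) ℝ,
        Sᵀ * Matrix.fromBlocks (0 : Matrix (Fin n) (Fin n) ℝ) 1 (-1) 0 * S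
            = Matrix.fromBlocks (0 : Matrix (Fin n) (Fin n) ℝ) 1 (-1) 0
        ∧ Cov = (ℏ / 2) • (Sᵀ * S) :=
  gaussian_pure_iff_symplectic_general ℏ hℏ n Cov hCov huncert
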